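/- Let c > 0 and K₀ be the absolute constants from the L²-flattening lemma. Let p be a prime, η a symmetric probability measure on SL₂(𝔽_p), and K a real number with K₀ ≤ K < p^{1/10}, such that η(gH) < K^{-1} for every proper subgroup H of SL₂(𝔽_p) and every g ∈ SL₂(𝔽_p). Then for every ℓ ∈ ℕ, ‖η^{(2^{ℓ+1})}‖_∞ ≤ ‖η^{(2^ℓ)}‖₂² ≤ 2·K^{-2cℓ}·‖η‖₂² + 2·K²·p^{-3}. -/

import Mathlib

open scoped Classical

/-- Convolution of two real functions on a finite group:
`(f₁ ∗ f₂)(x) = ∑_h f₁(h)·f₂(h⁻¹x)`. -/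
noncomputable def conv {G : Type*} [Group G] [Fintype G] (f₁ f₂ : G → ℝ) : G → ℝ :=
  fun x => ∑ h, f₁ h * f₂ (h⁻¹ * x)

/-- The `ℓ`-fold convolution `f^{(ℓ)}` of `f` with itself (with `f^{(0)}` the point
mass at the identity, so that `f^{(1)} = f`). -/
noncomputable def iterConv {G : Type*} [Group G] [Fintype G] (f : G → ℝ) : ℕ → G → ℝ
  | 0 => fun x => if x = 1 then 1 else 0
  | n + 1 => conv (iterConv f n) f

/-- `‖f‖₂ = (∑_g f(g)²)^{1/2}`. -/
noncomputable def l2Norm {G : Type*} [Fintype G] (f : G → ℝ) : ℝ :=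
  Real.sqrt (∑ g, f g ^ 2)

/-- `‖f‖_∞ = max_g f(g)` (for a function on a finite type). -/
noncomputable def supNorm {G : Type*} [Fintype G] (f : G → ℝ) : ℝ :=
  ⨆ g, f g

/-- The mass `η(gH) = ∑_{h ∈ H} η(g·h)` that `η` gives to the coset `gH`. -/
noncomputable def cosetMass {G : Type*} [Group G] [Fintype G] (η : G → ℝ) (g : G)
    (H : Subgroup G) : ℝ :=
  ∑ h : H, η (g * h)

/-- `η` is a probability measure on the finite group `G`: it is nonnegative and sums to 1. -/
def IsProbMeasure {G : Type*} [Group G] [Fintype G] (η : G → ℝ) : Prop :=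
  (∀ g, 0 ≤ η g) ∧ ∑ g, η g = 1

/-- `η` is symmetric: `η(g) = η(g⁻¹)` for all `g`. -/
def IsSymmetric {G : Type*} [Group G] (η : G → ℝ) : Prop :=
  ∀ g, η g = η g⁻¹


/-!
Since `η^{(2^{ℓ+1})} = η^{(2^ℓ)} ∗ η^{(2^ℓ)}`, Cauchy–Schwarz bounds its values by
`‖η^{(2^ℓ)}‖₂²`. The norms `aₗ = ‖η^{(2^ℓ)}‖₂` are non-increasing (Jensen), and each `η^{(n)}`,
`n ≥ 1`, is again a symmetric probability measure giving every proper coset mass `< K⁻¹`, being an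
average of translates of `η`. So flattening yields `aₗ₊₁ ≤ K^{-c} aₗ` whenever
`aₗ > K p^{-3/2}`, whence `aₗ ≤ max (K^{-cℓ} a₀) (K p^{-3/2})`, which squares to the bound.
-/

lemma l2Norm_nonneg {α : Type*} [Fintype α] (f : α → ℝ) : 0 ≤ l2Norm f :=
  Real.sqrt_nonneg _

section Convolution

variable {G : Type*} [Group G] [Fintype G]

lemma sum_mul_apply {M : Type*} [AddCommMonoid M] (f : G → M) (a : G) :
    ∑ x, f (a * x) = ∑ x, f x :=
  Equiv.sum_comp (Equiv.mulLeft a) f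

lemma sum_inv_mul_apply {M : Type*} [AddCommMonoid M] (f : G → M) (a : G) :
    ∑ x, f (x⁻¹ * a) = ∑ x, f x :=
  Equiv.sum_comp ((Equiv.inv G).trans (Equiv.mulRight a)) f

lemma sum_conv (f g : G → ℝ) : ∑ x, conv f g x = (∑ x, f x) * ∑ x, g x := by
  unfold conv
  rw [Finset.sum_comm, Finset.sum_mul]
  exact Finset.sum_congr rfl fun h _ => by rw [← Finset.mul_sum, sum_mul_apply g h⁻¹]

lemma conv_assoc (f g k : G → ℝ) : conv (conv f g) k = conv f (conv g k) := by
  funext x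
  simp only [conv, Finset.sum_mul, Finset.mul_sum]
  rw [Finset.sum_comm]
  refine Finset.sum_congr rfl fun z _ => ?_
  rw [← Equiv.sum_comp (Equiv.mulLeft z)]
  simp [mul_assoc]

lemma iterConv_zero_conv (f g : G → ℝ) : conv (iterConv g 0) f = f := by
  funext x
  simp [conv, iterConv, ite_mul]

lemma conv_iterConv_zero (f g : G → ℝ) : conv f (iterConv g 0) = f := by
  funext x
  simp [conv, iterConv, mul_ite, inv_mul_eq_one]

lemma iterConv_one (f : G → ℝ) : iterConv f 1 = f :=
  iterConv_zero_conv f f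

lemma iterConv_add (f : G → ℝ) (m : ℕ) :
    ∀ n, iterConv f (m + n) = conv (iterConv f m) (iterConv f n)
  | 0 => (conv_iterConv_zero _ f).symm
  | n + 1 => by
    change conv (iterConv f (m + n)) f = conv (iterConv f m) (conv (iterConv f n) f)
    rw [iterConv_add f m n, conv_assoc]

lemma iterConv_succ' (f : G → ℝ) (n : ℕ) : iterConv f (n + 1) = conv f (iterConv f n) := by
  rw [add_comm, iterConv_add, iterConv_one]

lemma iterConv_two_pow_succ (f : G → ℝ) (n : ℕ) :
    iterConv f (2 ^ (n + 1)) = conv (iterConv f (2 ^ n)) (iterConv f (2 ^ n)) := by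
  rw [← iterConv_add, ← two_mul, pow_succ']

lemma isProbMeasure_conv {f g : G → ℝ} (hf : IsProbMeasure f) (hg : IsProbMeasure g) :
    IsProbMeasure (conv f g) :=
  ⟨fun _ => Finset.sum_nonneg fun h _ => mul_nonneg (hf.1 h) (hg.1 _), by
    rw [sum_conv, hf.2, hg.2, one_mul]⟩

lemma isProbMeasure_iterConv {f : G → ℝ} (hf : IsProbMeasure f) :
    ∀ n, IsProbMeasure (iterConv f n)
  | 0 => ⟨fun x => by simp only [iterConv]; split <;> norm_num, by simp [iterConv]⟩
  | n + 1 => isProbMeasure_conv (isProbMeasure_iterConv hf n) hf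

lemma IsSymmetric.conv_apply_inv {f g : G → ℝ} (hf : IsSymmetric f) (hg : IsSymmetric g)
    (x : G) : conv f g x⁻¹ = conv g f x := by
  rw [conv, ← Equiv.sum_comp (Equiv.mulLeft x⁻¹)]
  refine Finset.sum_congr rfl fun h _ => ?_
  rw [Equiv.coe_mulLeft, hf, hg, mul_comm]
  congr 2 <;> group

lemma isSymmetric_iterConv {f : G → ℝ} (hf : IsSymmetric f) : ∀ n, IsSymmetric (iterConv f n)
  | 0 => fun x => by simp [iterConv]
  | n + 1 => fun x => by
    change _ = conv (iterConv f n) f x⁻¹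
    rw [(isSymmetric_iterConv hf n).conv_apply_inv hf, iterConv_succ']

lemma conv_apply_le_l2Norm_mul (f g : G → ℝ) (x : G) : conv f g x ≤ l2Norm f * l2Norm g := by
  have h := Real.sum_mul_le_sqrt_mul_sqrt Finset.univ f (fun h => g (h⁻¹ * x))
  rwa [sum_inv_mul_apply (fun y => g y ^ 2)] at h

lemma supNorm_conv_self_le (f : G → ℝ) : supNorm (conv f f) ≤ l2Norm f ^ 2 :=
  ciSup_le fun x => (conv_apply_le_l2Norm_mul f f x).trans_eq (sq _).symm

lemma l2Norm_conv_le (f : G → ℝ) {η : G → ℝ} (hη : IsProbMeasure η) :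
    l2Norm (conv f η) ≤ l2Norm f := by
  have jensen : ∀ x, conv f η x ^ 2 ≤ ∑ h, η (h⁻¹ * x) * f h ^ 2 := by
    intro x
    have hw : ∑ h, η (h⁻¹ * x) = 1 := by
      rw [sum_inv_mul_apply η, hη.2]
    simpa [conv, mul_comm] using (even_two.convexOn_pow (𝕜 := ℝ)).map_sum_le
      (t := Finset.univ) (fun h _ => hη.1 (h⁻¹ * x)) hw (fun h _ => Set.mem_univ (f h))
  refine Real.sqrt_le_sqrt ?_
  calc ∑ x, conv f η x ^ 2 ≤ ∑ x, ∑ h, η (h⁻¹ * x) * f h ^ 2 :=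
        Finset.sum_le_sum fun x _ => jensen x
    _ = ∑ h, (∑ x, η (h⁻¹ * x)) * f h ^ 2 := by
        rw [Finset.sum_comm]
        simp only [Finset.sum_mul]
    _ = ∑ h, f h ^ 2 := by
        simp only [sum_mul_apply η, hη.2, one_mul]

lemma cosetMass_conv (f η : G → ℝ) (g : G) (H : Subgroup G) :
    cosetMass (conv f η) g H = ∑ y, f y * cosetMass η (y⁻¹ * g) H := by
  simp only [cosetMass, conv, Finset.mul_sum, mul_assoc]
  exact Finset.sum_comm

lemma cosetMass_conv_lt {f η : G → ℝ} (hf : IsProbMeasure f) {H : Subgroup G} {B : ℝ}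
    (hη : ∀ g, cosetMass η g H < B) (g : G) : cosetMass (conv f η) g H < B := by
  obtain ⟨y₀, hy₀⟩ : ∃ y, 0 < f y := by
    by_contra! h
    have : ∑ y, f y = 0 := Finset.sum_eq_zero fun y _ => (h y).antisymm (hf.1 y)
    exact one_ne_zero (hf.2.symm.trans this)
  calc cosetMass (conv f η) g H = ∑ y, f y * cosetMass η (y⁻¹ * g) H := cosetMass_conv f η g H
    _ < ∑ y, f y * B :=
        Finset.sum_lt_sum (fun y _ => mul_le_mul_of_nonneg_left (hη _).le (hf.1 y))
          ⟨y₀, Finset.mem_univ _, mul_lt_mul_of_pos_left (hη _) hy₀⟩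
    _ = B := by rw [← Finset.sum_mul, hf.2, one_mul]

lemma cosetMass_iterConv_lt {η : G → ℝ} (hη : IsProbMeasure η) {H : Subgroup G} {B : ℝ}
    (hB : ∀ g, cosetMass η g H < B) {n : ℕ} (hn : n ≠ 0) (g : G) :
    cosetMass (iterConv η n) g H < B := by
  obtain ⟨m, rfl⟩ := Nat.exists_eq_succ_of_ne_zero hn
  exact cosetMass_conv_lt (isProbMeasure_iterConv hη m) hB g

end Convolution

lemma le_max_pow_mul_of_contract_above {a : ℕ → ℝ} {q T : ℝ} (hq : 0 ≤ q)
    (hanti : ∀ n, a (n + 1) ≤ a n) (hcontract : ∀ n, T < a n → a (n + 1) ≤ q * a n) :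
    ∀ n, a n ≤ max (q ^ n * a 0) T
  | 0 => by simp
  | n + 1 => by
    rcases le_or_gt (a n) T with hsmall | hlarge
    · exact le_max_of_le_right ((hanti n).trans hsmall)
    · have ih : a n ≤ q ^ n * a 0 :=
        (le_max_iff.mp (le_max_pow_mul_of_contract_above hq hanti hcontract n)).resolve_right
          hlarge.not_ge
      calc a (n + 1) ≤ q * a n := hcontract n hlarge
        _ ≤ q ^ (n + 1) * a 0 := by
          rw [pow_succ', mul_assoc]
          exact mul_le_mul_of_nonneg_left ih hq
        _ ≤ _ := le_max_left _ _

lemma sq_le_sq_add_sq_of_le_max {x y z : ℝ} (hx : 0 ≤ x) (h : x ≤ max y z) :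
    x ^ 2 ≤ y ^ 2 + z ^ 2 := by
  rcases le_max_iff.mp h with h | h <;> nlinarith

lemma cosetMass_bot {G : Type*} [Group G] [Fintype G] (η : G → ℝ) (g : G) :
    cosetMass η g ⊥ = η g := by
  simp [cosetMass, Subgroup.mem_bot.mp (default : (⊥ : Subgroup G)).2]

instance Matrix.SpecialLinearGroup.nontrivial_fin_two {R : Type*} [CommRing R] [Nontrivial R] :
    Nontrivial (Matrix.SpecialLinearGroup (Fin 2) R) := by
  refine ⟨⟨⟨!![1, 1; 0, 1], by simp [Matrix.det_fin_two_of]⟩, 1, fun h => ?_⟩⟩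
  simpa using congrArg (fun A : Matrix.SpecialLinearGroup (Fin 2) R => A 0 1) h

theorem supNorm_iterated_l2_flattening_general
    (c : ℝ) (K₀ : ℝ)
    (hflat : ∀ (p : ℕ) [Fact p.Prime],
      ∀ η : Matrix.SpecialLinearGroup (Fin 2) (ZMod p) → ℝ,
        IsProbMeasure η → IsSymmetric η →
        ∀ K : ℝ, K₀ ≤ K → K < (p : ℝ) ^ ((1 : ℝ) / 10) →
          (∀ H : Subgroup (Matrix.SpecialLinearGroup (Fin 2) (ZMod p)), H ≠ ⊤ →
            ∀ g, cosetMass η g H < K⁻¹) →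
          l2Norm η > K * (p : ℝ) ^ (-(3 : ℝ) / 2) →
          l2Norm (conv η η) < K ^ (-c) * l2Norm η)
    (p : ℕ) [Fact p.Prime]
    (η : Matrix.SpecialLinearGroup (Fin 2) (ZMod p) → ℝ)
    (hη : IsProbMeasure η) (hsym : IsSymmetric η)
    (K : ℝ) (hK₀ : K₀ ≤ K) (hK : K < (p : ℝ) ^ ((1 : ℝ) / 10))
    (hcoset : ∀ H : Subgroup (Matrix.SpecialLinearGroup (Fin 2) (ZMod p)), H ≠ ⊤ →
      ∀ g, cosetMass η g H < K⁻¹) :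
    ∀ ℓ : ℕ,
      supNorm (iterConv η (2 ^ (ℓ + 1))) ≤ l2Norm (iterConv η (2 ^ ℓ)) ^ 2 ∧
      l2Norm (iterConv η (2 ^ ℓ)) ^ 2
        ≤ 2 * K ^ (-(2 * c * ℓ)) * l2Norm η ^ 2 + 2 * K ^ 2 * (p : ℝ) ^ (-(3 : ℝ)) := by
  have hKpos : 0 < K :=
    inv_pos.mp ((hη.1 1).trans_lt (cosetMass_bot η 1 ▸ hcoset ⊥ bot_ne_top 1))
  have hanti (n : ℕ) : l2Norm (iterConv η (2 ^ (n + 1))) ≤ l2Norm (iterConv η (2 ^ n)) := by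
    rw [iterConv_two_pow_succ]
    exact l2Norm_conv_le _ (isProbMeasure_iterConv hη _)
  have hflatten (n : ℕ) (hn : K * (p : ℝ) ^ (-(3 : ℝ) / 2) < l2Norm (iterConv η (2 ^ n))) :
      l2Norm (iterConv η (2 ^ (n + 1))) ≤ K ^ (-c) * l2Norm (iterConv η (2 ^ n)) := by
    rw [iterConv_two_pow_succ]
    exact (hflat p _ (isProbMeasure_iterConv hη _) (isSymmetric_iterConv hsym _) K hK₀ hK
      (fun H hH => cosetMass_iterConv_lt hη (hcoset H hH) (pow_ne_zero _ two_ne_zero)) hn).le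
  intro ℓ
  refine ⟨iterConv_two_pow_succ η ℓ ▸ supNorm_conv_self_le _, ?_⟩
  have hdecay := le_max_pow_mul_of_contract_above (Real.rpow_nonneg hKpos.le (-c)) hanti hflatten ℓ
  have hq : ((K ^ (-c)) ^ ℓ) ^ 2 = K ^ (-(2 * c * ℓ)) := by
    rw [← pow_mul, ← Real.rpow_natCast, ← Real.rpow_mul hKpos.le]
    push_cast
    ring_nf
  have hT : (K * (p : ℝ) ^ (-(3 : ℝ) / 2)) ^ 2 = K ^ 2 * (p : ℝ) ^ (-(3 : ℝ)) := by
    rw [mul_pow, ← Real.rpow_natCast (_ ^ _) 2, ← Real.rpow_mul (Nat.cast_nonneg p)]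
    norm_num
  have hsq := sq_le_sq_add_sq_of_le_max (l2Norm_nonneg _) hdecay
  rw [pow_zero, iterConv_one, mul_pow, hq, hT] at hsq
  have hKpow := Real.rpow_nonneg hKpos.le (-(2 * c * ℓ))
  have hpow : 0 ≤ K ^ 2 * (p : ℝ) ^ (-(3 : ℝ)) := by positivity
  nlinarith [mul_nonneg hKpow (sq_nonneg (l2Norm η))]

/-- Sup-norm consequence of iterated `L²`-flattening: if `c > 0` and `K₀` are absolute
constants for which the flattening lemma holds, `p` is a prime, `η` a symmetric
probability measure on `SL₂(𝔽_p)` and `K₀ ≤ K < p^{1/10}` with `η(gH) < K⁻¹` for all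
proper subgroups `H` and all `g`, then for every `ℓ ∈ ℕ`,
`‖η^{(2^{ℓ+1})}‖_∞ ≤ ‖η^{(2^ℓ)}‖₂² ≤ 2·K^{-2cℓ}·‖η‖₂² + 2·K²·p^{-3}`. -/
theorem supNorm_iterated_l2_flattening
    (c : ℝ) (hc : 0 < c) (K₀ : ℝ)
    (hflat : ∀ (p : ℕ) [Fact p.Prime],
      ∀ η : Matrix.SpecialLinearGroup (Fin 2) (ZMod p) → ℝ,
        IsProbMeasure η → IsSymmetric η →
        ∀ K : ℝ, K₀ ≤ K → K < (p : ℝ) ^ ((1 : ℝ) / 10) →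
          (∀ H : Subgroup (Matrix.SpecialLinearGroup (Fin 2) (ZMod p)), H ≠ ⊤ →
            ∀ g, cosetMass η g H < K⁻¹) →
          l2Norm η > K * (p : ℝ) ^ (-(3 : ℝ) / 2) →
          l2Norm (conv η η) < K ^ (-c) * l2Norm η)
    (p : ℕ) [Fact p.Prime]
    (η : Matrix.SpecialLinearGroup (Fin 2) (ZMod p) → ℝ)
    (hη : IsProbMeasure η) (hsym : IsSymmetric η)
    (K : ℝ) (hK₀ : K₀ ≤ K) (hK : K < (p : ℝ) ^ ((1 : ℝ) / 10))
    (hcoset : ∀ H : Subgroup (Matrix.SpecialLinearGroup (Fin 2) (ZMod p)), H ≠ ⊤ →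
      ∀ g, cosetMass η g H < K⁻¹) :
    ∀ ℓ : ℕ,
      supNorm (iterConv η (2 ^ (ℓ + 1))) ≤ l2Norm (iterConv η (2 ^ ℓ)) ^ 2 ∧
      l2Norm (iterConv η (2 ^ ℓ)) ^ 2
        ≤ 2 * K ^ (-(2 * c * ℓ)) * l2Norm η ^ 2 + 2 * K ^ 2 * (p : ℝ) ^ (-(3 : ℝ)) :=
  supNorm_iterated_l2_flattening_general c K₀ hflat p η hη hsym K hK₀ hK hcoset
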